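/- arXiv:2411.18996 — 7 statements merged into one kernel-verified Lean document; each statement's English description precedes it below -/
import Mathlib

section
/- Let K/F be a cyclic cubic field extension with Galois group generated by σ, and let c ∈ K× satisfy N_{K/F}(c) ≠ 1. Then the F-bilinear map μ : K × K → K defined by μ(x,y) = x·σ(y) − c·σ(x)·y makes K into a division algebra over F, i.e., for every nonzero a ∈ K, both maps x ↦ μ(a,x) and x ↦ μ(x,a) are bijective. -/
/-- A twisted field `μ(x,y) = x·σ(y) − c·σ(x)·y` on a cyclic cubic extension `K/F`
with `N(c) ≠ 1` is a division algebra: all nonzero left and right multiplications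
are bijective. -/
theorem stmt0 (F K : Type*) [Field F] [Field K] [Algebra F K] [IsGalois F K]
    (hdim : Module.finrank F K = 3)
    (σ : K ≃ₐ[F] K) (hσ : ∀ τ : K ≃ₐ[F] K, τ ∈ Subgroup.zpowers σ)
    (c : K) (hc : c ≠ 0) (hN : Algebra.norm F c ≠ 1) :
    ∀ a : K, a ≠ 0 →
      Function.Bijective (fun x : K => a * σ x - c * σ a * x) ∧
      Function.Bijective (fun x : K => x * σ a - c * σ x * a) := by
  have hfd : FiniteDimensional F K := Module.finite_of_finrank_pos (by omega)
  intro a ha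
  have hNa : Algebra.norm F a ≠ 0 := (Algebra.norm_ne_zero_iff).mpr ha
  -- the key norm computation
  have key : ∀ x : K, a * σ x = c * σ a * x → x = 0 := by
    intro x hx
    by_contra hx0
    have hNx : Algebra.norm F x ≠ 0 := (Algebra.norm_ne_zero_iff).mpr hx0
    have h := congrArg (Algebra.norm F) hx
    rw [map_mul, map_mul, map_mul, Algebra.norm_eq_of_algEquiv σ,
      Algebra.norm_eq_of_algEquiv σ] at h
    apply hN
    have h' : (Algebra.norm F a * Algebra.norm F x) * Algebra.norm F c
        = (Algebra.norm F a * Algebra.norm F x) * 1 := by linear_combination -h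
    exact mul_left_cancel₀ (mul_ne_zero hNa hNx) h'
  have key2 : ∀ x : K, σ a * x = c * a * σ x → x = 0 := by
    intro x hx
    by_contra hx0
    have hNx : Algebra.norm F x ≠ 0 := (Algebra.norm_ne_zero_iff).mpr hx0
    have h := congrArg (Algebra.norm F) hx
    rw [map_mul, map_mul, map_mul, Algebra.norm_eq_of_algEquiv σ,
      Algebra.norm_eq_of_algEquiv σ] at h
    apply hN
    have h' : (Algebra.norm F a * Algebra.norm F x) * Algebra.norm F c
        = (Algebra.norm F a * Algebra.norm F x) * 1 := by linear_combination -h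
    exact mul_left_cancel₀ (mul_ne_zero hNa hNx) h'
  constructor
  · set L : K →ₗ[F] K :=
      (LinearMap.mulLeft F a).comp σ.toLinearMap - LinearMap.mulLeft F (c * σ a) with hL
    have hfun : (fun x : K => a * σ x - c * σ a * x) = ⇑L := by
      funext x; simp only [hL, LinearMap.sub_apply, LinearMap.comp_apply,
        LinearMap.mulLeft_apply, AlgEquiv.toLinearMap_apply]
    rw [hfun]
    have hinj : Function.Injective L := by
      rw [injective_iff_map_eq_zero]
      intro x hx
      have h0 : a * σ x - c * σ a * x = 0 := (congrFun hfun x).trans hx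
      exact key x (by linear_combination h0)
    exact ⟨hinj, (LinearMap.injective_iff_surjective).mp hinj⟩
  · set L : K →ₗ[F] K :=
      LinearMap.mulLeft F (σ a) - (LinearMap.mulLeft F (c * a)).comp σ.toLinearMap with hL
    have hfun : (fun x : K => x * σ a - c * σ x * a) = ⇑L := by
      funext x; simp only [hL, LinearMap.sub_apply, LinearMap.comp_apply,
        LinearMap.mulLeft_apply, AlgEquiv.toLinearMap_apply]; ring
    rw [hfun]
    have hinj : Function.Injective L := by
      rw [injective_iff_map_eq_zero]
      intro x hx
      have h0 : x * σ a - c * σ x * a = 0 := (congrFun hfun x).trans hx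
      exact key2 x (by linear_combination h0)
    exact ⟨hinj, (LinearMap.injective_iff_surjective).mp hinj⟩
end

section
/- Let K/F be a cyclic cubic extension with generator σ of the Galois group, and let c, c' ∈ K× with N(c) ≠ 1, N(c') ≠ 1, and N(c) = N(c'). Then the twisted fields (K, μ) and (K, μ') with μ(x,y) = x·σ(y) − c·σ(x)·y and μ'(x,y) = x·σ(y) − c'·σ(x)·y are isotopic: there exist F-linear isomorphisms f, g, h : K → K with h(μ'(x,y)) = μ(f(x), g(y)) for all x, y. -/
/-!
Since `N(c / c') = 1`, Hilbert's Theorem 90 gives `a ≠ 0` with `c * σ a = a * c'`, and then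
`a * μ'(x, y) = μ(a * x, y)`: left multiplication by `a`, the identity and left multiplication
by `a` form an isotopy. Hilbert 90 itself comes from Dedekind's lemma: for a suitable `z`, the
element `a = ∑ᵢ (η ση ⋯ σⁱ⁻¹η) σⁱ z` is nonzero, and `η σ a = a` because the sum telescopes.
-/

open Finset

section CyclicGalois

variable {F K : Type*} [Field F] [Field K] [Algebra F K] [FiniteDimensional F K] [IsGalois F K]
  {σ : K ≃ₐ[F] K}

theorem algebraMap_norm_eq_prod_range_orderOf (hσ : ∀ τ : K ≃ₐ[F] K, τ ∈ Subgroup.zpowers σ)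
    (x : K) : algebraMap F K (Algebra.norm F x) = ∏ i ∈ range (orderOf σ), (σ ^ i) x := by
  classical
  rw [Algebra.norm_eq_prod_automorphisms, ← IsCyclic.image_range_orderOf hσ, prod_image]
  intro i hi j hj hij
  exact pow_injOn_Iio_orderOf (by simpa using hi) (by simpa using hj) hij

omit [IsGalois F K] in
theorem exists_sum_pow_apply_ne_zero {b : ℕ → K} (hb : b 0 ≠ 0) :
    ∃ z : K, ∑ i ∈ range (orderOf σ), b i * (σ ^ i) z ≠ 0 := by
  by_contra! H
  have hindep : LinearIndependent K fun i : Fin (orderOf σ) ↦ ⇑(σ ^ (i : ℕ)) :=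
    (linearIndependent_monoidHom K K).comp
      (fun i : Fin (orderOf σ) ↦ ((σ ^ (i : ℕ) : K ≃ₐ[F] K) : K →* K)) fun i j hij ↦ Fin.ext <| pow_injOn_Iio_orderOf i.2 j.2 <| AlgEquiv.ext fun x ↦
        DFunLike.congr_fun hij x
  have hsum : ∑ i : Fin (orderOf σ), b i • ⇑(σ ^ (i : ℕ)) = 0 := by
    funext z
    rw [Pi.zero_apply, ← H z, ← Fin.sum_univ_eq_sum_range (fun i ↦ b i * (σ ^ i) z)]
    simp
  exact hb (Fintype.linearIndependent_iff.1 hindep _ hsum ⟨0, orderOf_pos σ⟩)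

theorem exists_ne_zero_mul_apply_eq_of_norm_eq_one
    (hσ : ∀ τ : K ≃ₐ[F] K, τ ∈ Subgroup.zpowers σ) {η : K} (hη : Algebra.norm F η = 1) :
    ∃ a : K, a ≠ 0 ∧ η * σ a = a := by
  set p : ℕ → K := fun i ↦ ∏ j ∈ range i, (σ ^ j) η with hp
  have hp_succ (i : ℕ) : p (i + 1) = η * σ (p i) := by
    simp only [hp, prod_range_succ', pow_succ', AlgEquiv.mul_apply, map_prod, pow_zero,
      AlgEquiv.one_apply, mul_comm]
  have hp_orderOf : p (orderOf σ) = 1 := by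
    rw [← (algebraMap F K).map_one, ← hη, algebraMap_norm_eq_prod_range_orderOf hσ]
  have hp_zero : p 0 = 1 := prod_range_zero _
  obtain ⟨z, hz⟩ := exists_sum_pow_apply_ne_zero (σ := σ) (b := p) (hp_zero ▸ one_ne_zero)
  refine ⟨_, hz, ?_⟩
  set f : ℕ → K := fun i ↦ p i * (σ ^ i) z with hf
  have hf_orderOf : f (orderOf σ) = f 0 := by
    simp only [hf, hp_orderOf, hp_zero, pow_orderOf_eq_one, pow_zero]
  calc η * σ (∑ i ∈ range (orderOf σ), f i) = ∑ i ∈ range (orderOf σ), f (i + 1) := by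
        simp only [hf, map_sum, mul_sum, map_mul, hp_succ, pow_succ', AlgEquiv.mul_apply,
          mul_assoc]
    _ = ∑ i ∈ range (orderOf σ), f i := by
        linear_combination sum_range_succ f (orderOf σ) - sum_range_succ' f (orderOf σ) +
          hf_orderOf

end CyclicGalois

theorem exists_isotopy_of_mul_apply_eq {F K : Type*} [Field F] [Field K] [Algebra F K]
    (σ : K ≃ₐ[F] K) {c c' a : K} (ha : a ≠ 0) (hca : c * σ a = a * c') :
    ∃ f g h : K ≃ₗ[F] K, ∀ x y : K,
      h (x * σ y - c' * σ x * y) = f x * σ (g y) - c * σ (f x) * g y := by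
  let mulA : K ≃ₗ[F] K := DistribMulAction.toLinearEquiv F K (Units.mk0 a ha)
  refine ⟨mulA, LinearEquiv.refl F K, mulA, fun x y ↦ ?_⟩
  simp only [mulA, DistribMulAction.toLinearEquiv_apply, Units.smul_mk0, smul_eq_mul,
    LinearEquiv.refl_apply, map_mul]
  linear_combination (σ x * y) * hca

theorem stmt1_general (F K : Type*) [Field F] [Field K] [Algebra F K] [IsGalois F K]
    (hdim : Module.finrank F K = 3)
    (σ : K ≃ₐ[F] K) (hσ : ∀ τ : K ≃ₐ[F] K, τ ∈ Subgroup.zpowers σ)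
    (c c' : K) (hc' : c' ≠ 0)
    (hNN : Algebra.norm F c = Algebra.norm F c') :
    ∃ f g h : K ≃ₗ[F] K, ∀ x y : K,
      h (x * σ y - c' * σ x * y) = f x * σ (g y) - c * σ (f x) * g y := by
  have : FiniteDimensional F K := .of_finrank_pos (by omega)
  have hnorm : Algebra.norm F (c / c') = 1 := by
    rw [div_eq_mul_inv, map_mul, Algebra.norm_inv, hNN,
      mul_inv_cancel₀ (Algebra.norm_ne_zero_iff.2 hc')]
  obtain ⟨a, ha, hσa⟩ := exists_ne_zero_mul_apply_eq_of_norm_eq_one hσ hnorm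
  refine exists_isotopy_of_mul_apply_eq σ ha ?_
  rwa [div_mul_eq_mul_div, div_eq_iff hc'] at hσa

/-- Twisted fields with the same norm of the twisting element are isotopic. -/
theorem stmt1 (F K : Type*) [Field F] [Field K] [Algebra F K] [IsGalois F K]
    (hdim : Module.finrank F K = 3)
    (σ : K ≃ₐ[F] K) (hσ : ∀ τ : K ≃ₐ[F] K, τ ∈ Subgroup.zpowers σ)
    (c c' : K) (hc : c ≠ 0) (hc' : c' ≠ 0)
    (hN : Algebra.norm F c ≠ 1) (hN' : Algebra.norm F c' ≠ 1)
    (hNN : Algebra.norm F c = Algebra.norm F c') :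
    ∃ f g h : K ≃ₗ[F] K, ∀ x y : K,
      h (x * σ y - c' * σ x * y) = f x * σ (g y) - c * σ (f x) * g y :=
  stmt1_general F K hdim σ hσ c c' hc' hNN
end

section
/- Let K/F be a cyclic cubic extension with generator σ and c ∈ K×. The map ω : K ⊗_F K → K³ sending x ⊗ y to (xy, x·σ(y), x·σ²(y)) is a K-algebra isomorphism carrying the multiplication 1 ⊗ μ (where μ(x,y) = x·σ(y) − c·σ(x)·y) to the multiplication ν on K³ given coordinatewise by ν((x_i),(y_i)) = (x_i y_{i+1} − c_i x_{i+1} y_i), where c_i = σ^i(c) and indices are mod 3. -/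
/-!
By Dedekind's independence of characters, for distinct `F`-embeddings `τ i : K → L` the
base change `x ⊗ y ↦ (x * τ i y)ᵢ` of `AlgHom.pi τ` is surjective onto `L^ι`: a linear form
vanishing on its image has coefficients `gᵢ` with `∑ gᵢ τ i = 0`. When there are `[K : F]`
embeddings both sides have `L`-dimension `[K : F]`, so it is an isomorphism. For a cyclic
cubic extension take `τ i = σ ^ i`; as `σ` has order 3, `σ ^ (i + 1) = σ ^ i * σ` holds for
`i : Fin 3`, and this identity turns `1 ⊗ μ` into `ν` coordinatewise.
-/

open scoped TensorProduct
open Function Module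

lemma pow_val_add_one_of_orderOf_eq {G : Type*} [Monoid G] {g : G} {n : ℕ} [NeZero n]
    (h : orderOf g = n) (i : Fin n) : g ^ ((i + 1 : Fin n) : ℕ) = g ^ (i : ℕ) * g := by
  subst h
  rw [← pow_succ, Fin.val_add, Fin.val_one', Nat.add_mod_mod, pow_mod_orderOf]

lemma injective_pow_val_of_orderOf_eq {G : Type*} [Monoid G] {g : G} {n : ℕ}
    (h : orderOf g = n) : Injective fun i : Fin n => g ^ (i : ℕ) := fun i j hij =>
  Fin.ext <| pow_injOn_Iio_orderOf (by simp [h]) (by simp [h]) hij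

section Embeddings

variable {F K L ι : Type*} [Field F] [Field K] [Field L] [Algebra F K] [Algebra F L]

lemma AlgHom.liftEquiv_pi_tmul (τ : ι → K →ₐ[F] L) (x : L) (y : K) :
    AlgHom.liftEquiv F L K (ι → L) (AlgHom.pi τ) (x ⊗ₜ y) = fun i => x * τ i y := by
  ext i; simp

lemma AlgHom.surjective_liftEquiv_pi [Fintype ι] {τ : ι → K →ₐ[F] L} (hτ : Injective τ) :
    Surjective (AlgHom.liftEquiv F L K (ι → L) (AlgHom.pi τ)) := by
  classical
  set φ := (AlgHom.liftEquiv F L K (ι → L) (AlgHom.pi τ)).toLinearMap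
  change Surjective φ
  rw [← LinearMap.range_eq_top]
  by_contra hφ
  obtain ⟨g, hg, hgφ⟩ :=
    Submodule.exists_dual_map_eq_bot_of_lt_top (lt_top_iff_ne_top.2 hφ) inferInstance
  have hrel : ∑ i, g (Pi.single i 1) • (τ i).toLinearMap = 0 := by
    ext y
    have : g (φ (1 ⊗ₜ y)) = 0 := by
      rw [← Submodule.mem_bot L, ← hgφ]
      exact Submodule.mem_map_of_mem (LinearMap.mem_range_self φ _)
    rw [LinearMap.zero_apply, ← this, pi_eq_sum_univ' (φ (1 ⊗ₜ y))]
    simp [φ, mul_comm]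
  have hcoef := Fintype.linearIndependent_iff.1
    ((linearIndependent_algHom_toLinearMap F K L).comp τ hτ) _ hrel
  exact hg ((Pi.basisFun L ι).ext fun i => by simpa using hcoef i)

lemma AlgHom.bijective_liftEquiv_pi [Fintype ι] [FiniteDimensional F K] {τ : ι → K →ₐ[F] L}
    (hτ : Injective τ) (hcard : Fintype.card ι = finrank F K) :
    Bijective (AlgHom.liftEquiv F L K (ι → L) (AlgHom.pi τ)) := by
  have hfr : finrank L (L ⊗[F] K) = finrank L (ι → L) := by simp [hcard]
  have hsurj := AlgHom.surjective_liftEquiv_pi hτ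
  exact ⟨(LinearMap.injective_iff_surjective_of_finrank_eq_finrank hfr).2 hsurj, hsurj⟩

end Embeddings

/-- The splitting isomorphism `ω : K ⊗_F K ≃ K³`, `x ⊗ y ↦ (x·σ^i(y))_i`, is a
`K`-linear isomorphism carrying the base-changed twisted-field multiplication
`1 ⊗ μ` (determined on pure tensors by `(a ⊗ x)·(b ⊗ y) = ab ⊗ μ(x,y)`) to the
multiplication `ν((x_i),(y_i)) = (x_i y_{i+1} − σ^i(c) x_{i+1} y_i)` on `K³`. -/
theorem stmt2 (F K : Type*) [Field F] [Field K] [Algebra F K] [IsGalois F K]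
    (hdim : Module.finrank F K = 3)
    (σ : K ≃ₐ[F] K) (hσ : ∀ τ : K ≃ₐ[F] K, τ ∈ Subgroup.zpowers σ)
    (c : K) :
    ∃ ω : (K ⊗[F] K) ≃ₗ[K] (Fin 3 → K),
      (∀ x y : K, ω (x ⊗ₜ[F] y) = fun i : Fin 3 => x * (σ ^ (i : ℕ)) y) ∧
      (∀ a b x y : K,
        ω ((a * b) ⊗ₜ[F] (x * σ y - c * σ x * y)) = fun i : Fin 3 =>
          ω (a ⊗ₜ[F] x) i * ω (b ⊗ₜ[F] y) (i + 1)
            - (σ ^ (i : ℕ)) c * ω (a ⊗ₜ[F] x) (i + 1) * ω (b ⊗ₜ[F] y) i) := by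
  have : FiniteDimensional F K := Module.finite_of_finrank_eq_succ hdim
  have hord : orderOf σ = 3 := by
    rw [orderOf_eq_card_of_forall_mem_zpowers hσ, IsGalois.card_aut_eq_finrank, hdim]
  let τ : Fin 3 → K →ₐ[F] K := fun i => (σ ^ (i : ℕ)).toAlgHom
  have hτ : Injective τ :=
    AlgEquiv.coe_toAlgHom_injective.comp (injective_pow_val_of_orderOf_eq hord)
  let ω := AlgEquiv.ofBijective _ (AlgHom.bijective_liftEquiv_pi hτ (by simp [hdim]))
  have hω (x y : K) : ω (x ⊗ₜ y) = fun i : Fin 3 => x * (σ ^ (i : ℕ)) y :=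
    AlgHom.liftEquiv_pi_tmul τ x y
  refine ⟨ω.toLinearEquiv, hω, fun a b x y => ?_⟩
  funext i
  simp only [AlgEquiv.toLinearEquiv_apply, hω, pow_val_add_one_of_orderOf_eq hord,
    AlgEquiv.mul_apply, map_sub, map_mul]
  ring
end

section
/- Let F be a field, d₀, d₁, d₂ ∈ F× with d := d₀d₁d₂ ≠ −1, and let y = (y₀, y₁, y₂), y' = (y'₀, y'₁, y'₂) ∈ F³ with all coordinates nonzero. Let R_y = [[0, y₂, d₀y₁], [d₁y₂, 0, y₀], [y₁, d₂y₀, 0]] and similarly R_{y'}. Then the characteristic polynomial of R_{y'}⁻¹ R_y is (X − y₀/y'₀)(X − y₁/y'₁)(X − y₂/y'₂). -/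
open Polynomial

/-- The matrix of right multiplication by `y` in the split Albert algebra
`φ_{d₀,d₁,d₂}`. -/
def Ry {F : Type*} [Field F] (d y : Fin 3 → F) : Matrix (Fin 3) (Fin 3) F :=
  !![0, y 2, d 0 * y 1; d 1 * y 2, 0, y 0; y 1, d 2 * y 0, 0]

/-- The characteristic polynomial of `R_{y'}⁻¹ R_y` is
`(X − y₀/y'₀)(X − y₁/y'₁)(X − y₂/y'₂)`. -/
theorem stmt4 {F : Type*} [Field F] (d y y' : Fin 3 → F)
    (hd : ∀ i, d i ≠ 0) (hd' : d 0 * d 1 * d 2 ≠ -1)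
    (hy : ∀ i, y i ≠ 0) (hy' : ∀ i, y' i ≠ 0) :
    Matrix.charpoly ((Ry d y')⁻¹ * Ry d y) =
      (X - C (y 0 / y' 0)) * (X - C (y 1 / y' 1)) * (X - C (y 2 / y' 2)) := by
  set B := Ry d y' with hB
  set A := Ry d y with hA
  have hdetB : B.det = (1 + d 0 * d 1 * d 2) * (y' 0 * y' 1 * y' 2) := by
    rw [hB, Ry, Matrix.det_fin_three]
    simp
    ring
  have h1d : (1 : F) + d 0 * d 1 * d 2 ≠ 0 := by
    intro h
    exact hd' (by linear_combination h)
  have hdet0 : B.det ≠ 0 := by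
    rw [hdetB]
    exact mul_ne_zero h1d (mul_ne_zero (mul_ne_zero (hy' 0) (hy' 1)) (hy' 2))
  have hBA : B * (B⁻¹ * A) = A := by
    rw [← Matrix.mul_assoc, Matrix.mul_nonsing_inv B (isUnit_iff_ne_zero.2 hdet0), Matrix.one_mul]
  have hM : (B.map C) * Matrix.charmatrix (B⁻¹ * A) = (X : F[X]) • B.map C - A.map C := by
    rw [Matrix.charmatrix, Matrix.mul_sub]
    congr 1
    · ext i j
      simp [Matrix.mul_apply, Matrix.scalar_apply, Matrix.diagonal, Fin.sum_univ_three,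
        Matrix.smul_apply, smul_eq_mul]
    · rw [RingHom.mapMatrix_apply, ← Matrix.map_mul, hBA]
  have key : C B.det * Matrix.charpoly (B⁻¹ * A) =
      ((X : F[X]) • B.map C - A.map C).det := by
    rw [Matrix.charpoly, RingHom.map_det C B, RingHom.mapMatrix_apply, ← Matrix.det_mul, hM]
  apply mul_left_cancel₀ (show (C B.det : F[X]) ≠ 0 by simpa using hdet0)
  rw [key]
  set r0 := y 0 / y' 0 with hr0
  set r1 := y 1 / y' 1 with hr1
  set r2 := y 2 / y' 2 with hr2
  have e0 : y 0 = r0 * y' 0 := (div_mul_cancel₀ _ (hy' 0)).symm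
  have e1 : y 1 = r1 * y' 1 := (div_mul_cancel₀ _ (hy' 1)).symm
  have e2 : y 2 = r2 * y' 2 := (div_mul_cancel₀ _ (hy' 2)).symm
  rw [hdetB, hA, hB, Ry, Ry, e0, e1, e2, Matrix.det_fin_three]
  simp [Matrix.map_apply, Matrix.smul_apply, Matrix.sub_apply, smul_eq_mul, map_mul, map_add]
  ring
end

section
/- Let F be a field, d₀,d₁,d₂ ∈ F× with d := d₀d₁d₂ ≠ −1, and let x, y, x', y' ∈ F³ be regular elements (all coordinates nonzero) of the split Albert algebra φ_{d₀,d₁,d₂}. Then R_{x'}⁻¹R_x = R_{y'}⁻¹R_y if and only if there exists k ∈ F× with (x', y') = (kx, ky) or (y, y') = (kx, kx'). -/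
lemma Ry_det {F : Type*} [Field F] (d v : Fin 3 → F) :
    (Ry d v).det = v 0 * v 1 * v 2 * (1 + d 0 * d 1 * d 2) := by
  simp [Ry, Matrix.det_fin_three]; ring

lemma Ry_isUnit_det {F : Type*} [Field F] (d v : Fin 3 → F)
    (hd' : d 0 * d 1 * d 2 ≠ -1) (hv : ∀ i, v i ≠ 0) : IsUnit (Ry d v).det := by
  rw [Ry_det]
  have h1 : (1 : F) + d 0 * d 1 * d 2 ≠ 0 := by
    intro h; apply hd'; linear_combination h
  exact (mul_ne_zero (mul_ne_zero (mul_ne_zero (hv 0) (hv 1)) (hv 2)) h1).isUnit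

lemma Ry_smul {F : Type*} [Field F] (d v : Fin 3 → F) (k : F) :
    Ry d (k • v) = k • Ry d v := by
  ext i j
  fin_cases i <;> fin_cases j <;> simp [Ry] <;> ring

lemma Ry_smul_inj {F : Type*} [Field F] {d v w : Fin 3 → F} {k : F}
    (h : Ry d v = k • Ry d w) : v = k • w := by
  funext i
  fin_cases i
  · have := congrFun (congrFun h 1) 2; simpa [Ry] using this
  · have := congrFun (congrFun h 2) 0; simpa [Ry] using this
  · have := congrFun (congrFun h 0) 1; simpa [Ry] using this

lemma inv_smul_mat {F : Type*} [Field F] {k : F} (hk : k ≠ 0)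
    (A : Matrix (Fin 3) (Fin 3) F) (hA : IsUnit A.det) :
    (k • A)⁻¹ = k⁻¹ • A⁻¹ := by
  have := A.inv_smul' (Units.mk0 k hk) hA
  simpa [Units.smul_def] using this

lemma prop3 {F : Type*} [Field F] {u w : Fin 3 → F} (hu : ∀ i, u i ≠ 0)
    (hw0 : w 0 ≠ 0) (h01 : u 1 * w 0 = u 0 * w 1) (h02 : u 2 * w 0 = u 0 * w 2) :
    ∃ k : F, k ≠ 0 ∧ w = k • u := by
  have e0 : w 0 = (w 0 / u 0) * u 0 := (div_mul_cancel₀ (w 0) (hu 0)).symm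
  have e1 : w 1 = (w 0 / u 0) * u 1 := by
    rw [div_mul_eq_mul_div, eq_div_iff (hu 0)]; linear_combination -h01
  have e2 : w 2 = (w 0 / u 0) * u 2 := by
    rw [div_mul_eq_mul_div, eq_div_iff (hu 0)]; linear_combination -h02
  exact ⟨w 0 / u 0, div_ne_zero hw0 (hu 0),
    funext fun i => by fin_cases i <;> [exact e0; exact e1; exact e2]⟩

lemma propA {F : Type*} [Field F] {u w : Fin 3 → F} (hu : ∀ i, u i ≠ 0)
    (hw : ∀ i, w i ≠ 0) (hA : u 2 * w 1 = u 1 * w 2) (hB : u 2 * w 0 = u 0 * w 2) :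
    ∃ k : F, k ≠ 0 ∧ w = k • u :=
  prop3 hu (hw 0)
    (mul_left_cancel₀ (hu 2) (by linear_combination u 1 * hB - u 0 * hA)) hB

lemma propB {F : Type*} [Field F] {u w : Fin 3 → F} (hu : ∀ i, u i ≠ 0)
    (hw : ∀ i, w i ≠ 0) (hA : u 2 * w 1 = u 1 * w 2) (hC : u 1 * w 0 = u 0 * w 1) :
    ∃ k : F, k ≠ 0 ∧ w = k • u :=
  prop3 hu (hw 0) hC
    (mul_left_cancel₀ (mul_ne_zero (hu 1) (hw 1))
      (by linear_combination u 1 * w 0 * hA + u 1 * w 2 * hC))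

lemma propC {F : Type*} [Field F] {u w : Fin 3 → F} (hu : ∀ i, u i ≠ 0)
    (hw : ∀ i, w i ≠ 0) (hB : u 2 * w 0 = u 0 * w 2) (hC : u 1 * w 0 = u 0 * w 1) :
    ∃ k : F, k ≠ 0 ∧ w = k • u :=
  prop3 hu (hw 0) hC hB

/-- For regular `x, y, x', y'`, `R_{x'}⁻¹R_x = R_{y'}⁻¹R_y` iff `(x',y') = k(x,y)`
or `(y,y') = k(x,x')` for some `k ∈ F×`. -/
theorem stmt9 {F : Type*} [Field F] (d : Fin 3 → F) (hd : ∀ i, d i ≠ 0)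
    (hd' : d 0 * d 1 * d 2 ≠ -1) (x y x' y' : Fin 3 → F)
    (hx : ∀ i, x i ≠ 0) (hy : ∀ i, y i ≠ 0)
    (hx' : ∀ i, x' i ≠ 0) (hy' : ∀ i, y' i ≠ 0) :
    (Ry d x')⁻¹ * Ry d x = (Ry d y')⁻¹ * Ry d y ↔
      ∃ k : F, k ≠ 0 ∧
        ((x' = k • x ∧ y' = k • y) ∨ (y = k • x ∧ y' = k • x')) := by
  have hux := Ry_isUnit_det d x hd' hx
  have huy := Ry_isUnit_det d y hd' hy
  have hux' := Ry_isUnit_det d x' hd' hx'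
  have huy' := Ry_isUnit_det d y' hd' hy'
  constructor
  · intro h
    -- Case finishers
    have finishA : (∃ k : F, k ≠ 0 ∧ x' = k • x) →
        ∃ k : F, k ≠ 0 ∧ ((x' = k • x ∧ y' = k • y) ∨ (y = k • x ∧ y' = k • x')) := by
      rintro ⟨k, hk, hxk⟩
      rw [show Ry d x' = k • Ry d x from by rw [hxk, Ry_smul],
        inv_smul_mat hk _ hux, Matrix.smul_mul, Matrix.nonsing_inv_mul _ hux] at h
      have h3 : Ry d y' * (k⁻¹ • (1 : Matrix (Fin 3) (Fin 3) F)) = Ry d y := by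
        rw [h, ← Matrix.mul_assoc, Matrix.mul_nonsing_inv _ huy', Matrix.one_mul]
      have h4 : Ry d y = k⁻¹ • Ry d y' := by
        rw [← h3, Matrix.mul_smul, Matrix.mul_one]
      have h5 : Ry d y' = k • Ry d y := by
        rw [h4, smul_smul, mul_inv_cancel₀ hk, one_smul]
      exact ⟨k, hk, Or.inl ⟨hxk, Ry_smul_inj h5⟩⟩
    have finishB : (∃ k : F, k ≠ 0 ∧ y' = k • x') →
        ∃ k : F, k ≠ 0 ∧ ((x' = k • x ∧ y' = k • y) ∨ (y = k • x ∧ y' = k • x')) := by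
      rintro ⟨m, hm, hym⟩
      rw [show Ry d y' = m • Ry d x' from by rw [hym, Ry_smul],
        inv_smul_mat hm _ hux'] at h
      have h3 : Ry d x' * ((Ry d x')⁻¹ * Ry d x) = Ry d x := by
        rw [← Matrix.mul_assoc, Matrix.mul_nonsing_inv _ hux', Matrix.one_mul]
      rw [h, Matrix.smul_mul, Matrix.mul_smul, ← Matrix.mul_assoc,
        Matrix.mul_nonsing_inv _ hux', Matrix.one_mul] at h3
      have h5 : Ry d y = m • Ry d x := by
        rw [← h3, smul_smul, mul_inv_cancel₀ hm, one_smul]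
      exact ⟨m, hm, Or.inr ⟨Ry_smul_inj h5, hym⟩⟩
    -- Derive the cleared polynomial identity
    have h1 : Ry d y' * ((Ry d x')⁻¹ * Ry d x) = Ry d y := by
      rw [h, ← Matrix.mul_assoc, Matrix.mul_nonsing_inv _ huy', Matrix.one_mul]
    have h2 : Ry d y' * ((Ry d x').adjugate * Ry d x) = (Ry d x').det • Ry d y := by
      rw [Matrix.inv_def, Ring.inverse_eq_inv'] at h1
      rw [← h1, Matrix.smul_mul, Matrix.mul_smul, smul_smul,
        mul_inv_cancel₀ hux'.ne_zero, one_smul]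
    have e00 := congrFun (congrFun h2 0) 0
    have e11 := congrFun (congrFun h2 1) 1
    have e22 := congrFun (congrFun h2 2) 2
    simp [Ry, Matrix.mul_apply, Matrix.adjugate_fin_three, Fin.sum_univ_three,
      Matrix.smul_apply, Matrix.det_fin_three] at e00 e11 e22
    have f1 : (x 2 * x' 1 - x 1 * x' 2) * (x' 2 * y' 1 - x' 1 * y' 2) = 0 :=
      mul_left_cancel₀ (mul_ne_zero (hd 0) (hd 1))
        (by rw [mul_zero]; linear_combination e00)
    have f2 : (x 2 * x' 0 - x 0 * x' 2) * (x' 2 * y' 0 - x' 0 * y' 2) = 0 :=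
      mul_left_cancel₀ (mul_ne_zero (hd 1) (hd 2))
        (by rw [mul_zero]; linear_combination e11)
    have f3 : (x 1 * x' 0 - x 0 * x' 1) * (x' 1 * y' 0 - x' 0 * y' 1) = 0 :=
      mul_left_cancel₀ (mul_ne_zero (hd 0) (hd 2))
        (by rw [mul_zero]; linear_combination e22)
    rcases mul_eq_zero.mp f1 with f1x | f1b <;>
      rcases mul_eq_zero.mp f2 with f2x | f2b <;>
      rcases mul_eq_zero.mp f3 with f3x | f3b
    · exact finishA (propA hx hx' (sub_eq_zero.mp f1x) (sub_eq_zero.mp f2x))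
    · exact finishA (propA hx hx' (sub_eq_zero.mp f1x) (sub_eq_zero.mp f2x))
    · exact finishA (propB hx hx' (sub_eq_zero.mp f1x) (sub_eq_zero.mp f3x))
    · exact finishB (propC hx' hy' (sub_eq_zero.mp f2b) (sub_eq_zero.mp f3b))
    · exact finishA (propC hx hx' (sub_eq_zero.mp f2x) (sub_eq_zero.mp f3x))
    · exact finishB (propB hx' hy' (sub_eq_zero.mp f1b) (sub_eq_zero.mp f3b))
    · exact finishB (propA hx' hy' (sub_eq_zero.mp f1b) (sub_eq_zero.mp f2b))
    · exact finishB (propA hx' hy' (sub_eq_zero.mp f1b) (sub_eq_zero.mp f2b))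
  · rintro ⟨k, hk, ⟨hxk, hyk⟩ | ⟨hyx, hyx'⟩⟩
    · rw [hxk, hyk, Ry_smul, Ry_smul, inv_smul_mat hk _ hux,
        inv_smul_mat hk _ huy, Matrix.smul_mul, Matrix.smul_mul,
        Matrix.nonsing_inv_mul _ hux, Matrix.nonsing_inv_mul _ huy]
    · rw [hyx, hyx', Ry_smul, Ry_smul, inv_smul_mat hk _ hux',
        Matrix.smul_mul, Matrix.mul_smul, smul_smul, inv_mul_cancel₀ hk, one_smul]
end

section
/- Let F be a finite field and A a three-dimensional nonassociative division algebra over F. Let v = (x,y), v' = (x',y') ∈ A² with span⟨x,y⟩, span⟨x',y'⟩, span⟨x,x'⟩, span⟨y,y'⟩ all two-dimensional over F. If span⟨x,y⟩ = span⟨x',y'⟩, then Av ∩ Av' = 0. -/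
open Module

private lemma ne_smul_of_finrank_span_pair {F A : Type*} [Field F] [AddCommGroup A] [Module F A]
    {u w : A} (h : Module.finrank F (Submodule.span F {u, w}) = 2) (μ : F) : w ≠ μ • u := by
  rintro rfl
  have hspan : Submodule.span F ({u, μ • u} : Set A) = Submodule.span F {u} := by
    apply le_antisymm
    · rw [Submodule.span_le]
      rintro z hz
      simp only [Set.mem_insert_iff, Set.mem_singleton_iff] at hz
      rcases hz with rfl | rfl
      · exact Submodule.mem_span_singleton_self _
      · exact Submodule.smul_mem _ μ (Submodule.mem_span_singleton_self _)
    · exact Submodule.span_mono (Set.singleton_subset_iff.mpr (Set.mem_insert u _))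
  rw [hspan] at h
  rcases eq_or_ne u 0 with rfl | hu
  · rw [Submodule.span_zero_singleton] at h
    simp at h
  · rw [finrank_span_singleton hu] at h
    exact absurd h (by norm_num)


private lemma finrank_span_single_le {F A : Type*} [Field F] [AddCommGroup A] [Module F A]
    (v : A) : Module.finrank F (Submodule.span F ({v} : Set A)) ≤ 1 := by
  rcases eq_or_ne v 0 with rfl | hv
  · rw [Submodule.span_zero_singleton]; simp
  · rw [finrank_span_singleton hv]

private lemma exists_eigenvector_of_quadratic {F A : Type*} [Field F] [AddCommGroup A] [Module F A]
    [FiniteDimensional F A] (hdim : Module.finrank F A = 3)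
    (U : Module.End F A) (b : A) (hb : b ≠ 0)
    (hU2 : U (U b) ∈ Submodule.span F ({b, U b} : Set A)) :
    ∃ (lam : F) (c : A), c ≠ 0 ∧ U c = lam • c := by
  by_cases hcase : U b ∈ Submodule.span F ({b} : Set A)
  · obtain ⟨lam, hlam⟩ := Submodule.mem_span_singleton.mp hcase
    exact ⟨lam, b, hb, hlam.symm⟩
  · set W := Submodule.span F ({b, U b} : Set A) with hWdef
    have hbW : b ∈ W := Submodule.subset_span (Set.mem_insert _ _)
    have hUbW : U b ∈ W := Submodule.subset_span (by simp)
    have hWinv : W ≤ W.comap U := by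
      rw [hWdef, Submodule.span_le]
      rintro z hz
      simp only [Set.mem_insert_iff, Set.mem_singleton_iff] at hz
      rcases hz with rfl | rfl
      · exact hUbW
      · exact hU2
    have hWle : Module.finrank F W ≤ 2 := by
      have : W ≤ Submodule.span F ({b} : Set A) ⊔ Submodule.span F ({U b} : Set A) := by
        rw [hWdef, Set.insert_eq, Submodule.span_union]
      calc Module.finrank F W ≤ Module.finrank F ↥(Submodule.span F ({b} : Set A) ⊔
            Submodule.span F ({U b} : Set A)) := Submodule.finrank_mono this
        _ ≤ Module.finrank F (Submodule.span F ({b} : Set A)) +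
            Module.finrank F (Submodule.span F ({U b} : Set A)) :=
              Submodule.finrank_add_le_finrank_add_finrank _ _
        _ ≤ 2 := by
            have := finrank_span_single_le (F := F) b
            have := finrank_span_single_le (F := F) (U b)
            omega
    have hWge : 2 ≤ Module.finrank F W := by
      have hlt : Submodule.span F ({b} : Set A) < W := by
        refine lt_of_le_of_ne ?_ ?_
        · rw [Submodule.span_le, Set.singleton_subset_iff]; exact hbW
        · intro hEq; rw [hEq] at hcase; exact hcase hUbW
      have h1 : Module.finrank F (Submodule.span F ({b} : Set A)) = 1 :=
        finrank_span_singleton hb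
      have := Submodule.finrank_lt_finrank_of_lt hlt
      omega
    have hW2 : Module.finrank F W = 2 := le_antisymm hWle hWge
    have hQ : Module.finrank F (A ⧸ W) = 1 := by
      have := Submodule.finrank_quotient_add_finrank W
      omega
    have : Nontrivial (A ⧸ W) := by
      apply Module.nontrivial_of_finrank_pos (R := F); omega
    obtain ⟨q0, hq0⟩ := exists_ne (0 : A ⧸ W)
    have hq0span : Submodule.span F ({q0} : Set (A ⧸ W)) = ⊤ := by
      apply Submodule.eq_top_of_finrank_eq
      rw [finrank_span_singleton hq0, hQ]
    set Ubar := W.mapQ W U hWinv with hUbar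
    obtain ⟨lam, hlam⟩ := Submodule.mem_span_singleton.mp
      (hq0span ▸ Submodule.mem_top : Ubar q0 ∈ Submodule.span F ({q0} : Set (A ⧸ W)))
    have hscalar : ∀ z : A ⧸ W, Ubar z = lam • z := by
      intro z
      obtain ⟨c, hc⟩ := Submodule.mem_span_singleton.mp
        (hq0span ▸ Submodule.mem_top : z ∈ Submodule.span F ({q0} : Set (A ⧸ W)))
      rw [← hc, map_smul, ← hlam, smul_comm]
    set V : Module.End F A := U - lam • 1 with hV
    have hrange : LinearMap.range V ≤ W := by
      rintro w ⟨v, rfl⟩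
      have h0 : W.mkQ (V v) = 0 := by
        have h1 : W.mkQ (U v) = Ubar (W.mkQ v) := by
          simp [hUbar, Submodule.mapQ_apply, Submodule.mkQ_apply]
        rw [hV]
        simp only [LinearMap.sub_apply, LinearMap.smul_apply, Module.End.one_apply, map_sub,
          map_smul, h1, hscalar]
        abel
      rwa [Submodule.mkQ_apply, Submodule.Quotient.mk_eq_zero] at h0
    have hker : LinearMap.ker V ≠ ⊥ := by
      intro hbot
      have h3 := LinearMap.finrank_range_add_finrank_ker V
      rw [hbot, finrank_bot, hdim] at h3
      have h4 : Module.finrank F (LinearMap.range V) ≤ 2 :=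
        le_trans (Submodule.finrank_mono hrange) (le_of_eq hW2)
      omega
    obtain ⟨c, hcker, hc0⟩ := Submodule.ne_bot_iff _ |>.mp hker
    refine ⟨lam, c, hc0, ?_⟩
    have : U c - lam • c = 0 := by
      have := hcker
      rwa [LinearMap.mem_ker, hV, LinearMap.sub_apply, LinearMap.smul_apply,
        Module.End.one_apply] at this
    exact sub_eq_zero.mp this

/-- Proposition 6.7: if the spans `⟨x,y⟩, ⟨x',y'⟩, ⟨x,x'⟩, ⟨y,y'⟩` are all
two-dimensional and `⟨x,y⟩ = ⟨x',y'⟩`, then `Av ∩ Av' = 0`. -/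
theorem stmt15 {F A : Type*} [Field F] [Finite F] [AddCommGroup A] [Module F A]
    (mul : A →ₗ[F] A →ₗ[F] A)
    (hdim : Module.finrank F A = 3)
    (hl : ∀ a : A, a ≠ 0 → Function.Bijective fun z => mul a z)
    (hr : ∀ a : A, a ≠ 0 → Function.Bijective fun z => mul z a)
    (hna : ¬ ∀ a b c : A, mul (mul a b) c = mul a (mul b c))
    (x y x' y' : A)
    (h1 : Module.finrank F (Submodule.span F {x, y}) = 2)
    (h2 : Module.finrank F (Submodule.span F {x', y'}) = 2)
    (h3 : Module.finrank F (Submodule.span F {x, x'}) = 2)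
    (h4 : Module.finrank F (Submodule.span F {y, y'}) = 2)
    (heq : Submodule.span F {x, y} = Submodule.span F {x', y'}) :
    {w : A × A | ∃ a : A, w = (mul a x, mul a y)} ∩
      {w : A × A | ∃ a : A, w = (mul a x', mul a y')} = {0} := by
  have hFD : FiniteDimensional F A := FiniteDimensional.of_finrank_pos (by rw [hdim]; norm_num)
  have h1' : Module.finrank F (Submodule.span F ({y, x} : Set A)) = 2 := by
    rwa [Set.pair_comm]
  have hx : x ≠ 0 := by simpa using ne_smul_of_finrank_span_pair h1' 0
  have hy : y ≠ 0 := by simpa using ne_smul_of_finrank_span_pair h1 0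
  have hx'mem : x' ∈ Submodule.span F ({x, y} : Set A) := by
    rw [heq]; exact Submodule.subset_span (Set.mem_insert _ _)
  have hy'mem : y' ∈ Submodule.span F ({x, y} : Set A) := by
    rw [heq]; exact Submodule.subset_span (by simp)
  obtain ⟨α, β, hx'⟩ := Submodule.mem_span_pair.mp hx'mem
  obtain ⟨γ, δ, hy'⟩ := Submodule.mem_span_pair.mp hy'mem
  have hγ : γ ≠ 0 := by
    rintro rfl
    rw [zero_smul, zero_add] at hy'
    exact ne_smul_of_finrank_span_pair h4 δ hy'.symm
  -- the operator U = R_y⁻¹ ∘ R_x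
  have hRyb : Function.Bijective (mul.flip y) := hr y hy
  set eRy : A ≃ₗ[F] A := LinearEquiv.ofBijective (mul.flip y) hRyb with heRy
  set U : Module.End F A := (eRy.symm : A →ₗ[F] A) ∘ₗ mul.flip x with hU
  have hUkey : ∀ z : A, mul (U z) y = mul z x := by
    intro z
    exact eRy.apply_symm_apply (mul z x)
  have hinjRy : Function.Injective fun z : A => mul z y := (hr y hy).1
  ext w
  simp only [Set.mem_inter_iff, Set.mem_setOf_eq, Set.mem_singleton_iff]
  constructor
  · rintro ⟨⟨a, rfl⟩, b, hb⟩
    rcases eq_or_ne a 0 with rfl | ha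
    · simp [Prod.ext_iff]
    · exfalso
      have hbx : mul a x = mul b x' := congrArg Prod.fst hb
      have hby : mul a y = mul b y' := congrArg Prod.snd hb
      have hb0 : b ≠ 0 := by
        rintro rfl
        have h0 : mul a x = 0 := by simpa using hbx
        have hx0 : x = 0 := by
          have hinj := (hl a ha).1
          have h00 : (fun z => mul a z) x = (fun z => mul a z) 0 := by simpa using h0
          exact hinj h00
        exact hx hx0
      have R2 : mul a x = α • mul b x + β • mul b y := by
        rw [hbx, ← hx']; simp
      have R1 : mul a y = γ • mul b x + δ • mul b y := by
        rw [hby, ← hy']; simp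
      have ha_eq : a = γ • U b + δ • b := by
        apply hinjRy
        show mul a y = mul (γ • U b + δ • b) y
        rw [R1]
        have hrhs : mul (γ • U b + δ • b) y = γ • mul (U b) y + δ • mul b y := by
          simp
        rw [hrhs, hUkey b]
      have hUa : U a = α • U b + β • b := by
        apply hinjRy
        show mul (U a) y = mul (α • U b + β • b) y
        rw [hUkey a, R2]
        have hrhs : mul (α • U b + β • b) y = α • mul (U b) y + β • mul b y := by
          simp
        rw [hrhs, hUkey b]
      have h6 : α • U b + β • b = γ • U (U b) + δ • U b := by
        have h6' := congrArg U ha_eq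
        rw [map_add, map_smul, map_smul, hUa] at h6'
        exact h6'
      have h9 : γ • U (U b) = β • b + (α - δ) • U b := by
        have h9' : γ • U (U b) = α • U b + β • b - δ • U b :=
          eq_sub_of_add_eq h6.symm
        rw [h9', sub_smul]; abel
      have hU2mem : U (U b) ∈ Submodule.span F ({b, U b} : Set A) := by
        refine Submodule.mem_span_pair.mpr ⟨γ⁻¹ * β, γ⁻¹ * (α - δ), ?_⟩
        have h10 := congrArg (fun v : A => γ⁻¹ • v) h9
        simp only [smul_smul, inv_mul_cancel₀ hγ, one_smul, smul_add] at h10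
        exact h10.symm
      obtain ⟨lam, c, hc0, hUc⟩ := exists_eigenvector_of_quadratic hdim U b hb0 hU2mem
      have hxy : mul c x = mul c (lam • y) := by
        have h10 := hUkey c
        rw [hUc] at h10
        rw [← h10]
        simp
      have hxeq : x = lam • y := (hl c hc0).1 hxy
      exact ne_smul_of_finrank_span_pair h1' lam hxeq
  · rintro rfl
    exact ⟨⟨0, by simp [Prod.ext_iff]⟩, ⟨0, by simp [Prod.ext_iff]⟩⟩
end

section
/- Let F be a finite field and A a three-dimensional nonassociative division algebra over F. If v = (x,y), v' = (x',y') ∈ A² satisfy Av ∩ Av' ≠ 0 and Av ≠ Av', then the spans ⟨x,y⟩, ⟨x',y'⟩, ⟨x,x'⟩, ⟨y,y'⟩ are all two-dimensional over F and ⟨x,y⟩ ≠ ⟨x',y'⟩. -/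
open Module Submodule Function

section Aux

variable {F A : Type*} [Field F] [AddCommGroup A] [Module F A]

private lemma rank2' {u v : A} (h : LinearIndependent F ![u, v]) :
    Module.finrank F (Submodule.span F ({u, v} : Set A)) = 2 := by
  have hs : ({u, v} : Set A) = Set.range ![u, v] := by
    ext z
    simp [Matrix.range_cons, Matrix.range_empty]
    tauto
  rw [hs, finrank_span_eq_card h, Fintype.card_fin]

private lemma key (hdim : Module.finrank F A = 3) (Q : A →ₗ[F] A)
    (heig : ∀ (μ : F) (v : A), Q v = μ • v → v = 0)
    {b : A} (hb : b ≠ 0) {β δ γ : F}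
    (heq : β • Q (Q b) + δ • Q b + γ • b = 0) :
    β = 0 ∧ δ = 0 ∧ γ = 0 := by
  have : FiniteDimensional F A := FiniteDimensional.of_finrank_pos (by omega)
  have hβ : β = 0 := by
    by_contra hβ
    have h1 : β • Q (Q b) = -(δ • Q b + γ • b) := by
      apply eq_neg_of_add_eq_zero_left
      rw [← add_assoc]; exact heq
    have hQ2 : Q (Q b) = β⁻¹ • (-(δ • Q b + γ • b)) := by
      rw [← h1, smul_smul, inv_mul_cancel₀ hβ, one_smul]
    set W : Submodule F A := Submodule.span F ({b, Q b} : Set A) with hWdef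
    have hbW : b ∈ W := Submodule.subset_span (Set.mem_insert _ _)
    have hQbW : Q b ∈ W := Submodule.subset_span (Set.mem_insert_of_mem _ rfl)
    have hQ2W : Q (Q b) ∈ W := by
      rw [hQ2]
      exact W.smul_mem _ (neg_mem (W.add_mem (W.smul_mem _ hQbW) (W.smul_mem _ hbW)))
    have hle : W ≤ W.comap Q := by
      rw [hWdef, Submodule.span_le]
      rintro z (rfl | rfl)
      · exact hQbW
      · exact hQ2W
    have hind : LinearIndependent F ![b, Q b] := by
      rw [LinearIndependent.pair_iff' hb]
      intro c hc
      exact hb (heig c b hc.symm)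
    have hW2 : Module.finrank F W = 2 := rank2' hind
    have hq1 : Module.finrank F (A ⧸ W) = 1 := by
      have := Submodule.finrank_quotient_add_finrank W
      omega
    obtain ⟨v₀, hv₀, hgen⟩ := finrank_eq_one_iff'.1 hq1
    set Qbar := Submodule.mapQ W W Q hle with hQbar
    obtain ⟨μ, hμ⟩ := hgen (Qbar v₀)
    have hscal : ∀ z : A ⧸ W, Qbar z = μ • z := by
      intro z
      obtain ⟨c, rfl⟩ := hgen z
      rw [map_smul, ← hμ, smul_comm]
    set S : A →ₗ[F] A := Q - μ • LinearMap.id with hS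
    have hSrange : LinearMap.range S ≤ W := by
      rintro _ ⟨v, rfl⟩
      have hmk : W.mkQ (S v) = 0 := by
        have h1 : W.mkQ (Q v) = Qbar (W.mkQ v) := (Submodule.mapQ_apply W W Q v).symm
        simp only [hS, LinearMap.sub_apply, LinearMap.smul_apply, LinearMap.id_apply,
          map_sub, map_smul, h1, hscal, sub_self]
      rwa [← Submodule.Quotient.mk_eq_zero, ← Submodule.mkQ_apply]
    have hSinj : Function.Injective S := by
      rw [← LinearMap.ker_eq_bot]
      rw [eq_bot_iff]
      intro v hv
      rw [LinearMap.mem_ker] at hv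
      have : Q v = μ • v := by
        have := sub_eq_zero.1 (by simpa [hS] using hv)
        simpa using this
      simpa using heig μ v this
    have h3 : Module.finrank F (LinearMap.range S) = 3 := by
      rw [LinearMap.finrank_range_of_inj hSinj, hdim]
    have h2 : Module.finrank F (LinearMap.range S) ≤ 2 := hW2 ▸ Submodule.finrank_mono hSrange
    omega
  subst hβ
  rw [zero_smul, zero_add] at heq
  have hδ : δ = 0 := by
    by_contra hδ
    have : Q b = (-(δ⁻¹ * γ)) • b := by
      have h1 : δ • Q b = -(γ • b) := eq_neg_of_add_eq_zero_left heq
      have h2 : δ⁻¹ • (δ • Q b) = δ⁻¹ • -(γ • b) := congrArg _ h1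
      rw [smul_smul, inv_mul_cancel₀ hδ, one_smul, smul_neg, smul_smul] at h2
      rw [h2, neg_smul]
    exact hb (heig _ _ this)
  subst hδ
  rw [zero_smul, zero_add] at heq
  exact ⟨rfl, rfl, (smul_eq_zero.1 heq).resolve_right hb⟩

private lemma sets_eq (mul : A →ₗ[F] A →ₗ[F] A) {x y x' y' : A}
    (h1 : ∀ e : A, ∃ d : A, mul d x' = mul e x ∧ mul d y' = mul e y)
    (h2 : ∀ d : A, ∃ e : A, mul e x = mul d x' ∧ mul e y = mul d y') :
    {w : A × A | ∃ a : A, w = (mul a x, mul a y)} =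
      {w : A × A | ∃ a : A, w = (mul a x', mul a y')} := by
  ext w
  constructor
  · rintro ⟨a, rfl⟩
    obtain ⟨d, h, h'⟩ := h1 a
    exact ⟨d, by rw [h, h']⟩
  · rintro ⟨d, rfl⟩
    obtain ⟨e, h, h'⟩ := h2 d
    exact ⟨e, by rw [h, h']⟩

private lemma eq_of_smul (mul : A →ₗ[F] A →ₗ[F] A) {x y x' y' : A} {s : F} (hs : s ≠ 0)
    (hx : x' = s • x) (hy : y' = s • y) :
    {w : A × A | ∃ a : A, w = (mul a x, mul a y)} =
      {w : A × A | ∃ a : A, w = (mul a x', mul a y')} := by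
  apply sets_eq
  · intro e
    refine ⟨s⁻¹ • e, ?_, ?_⟩ <;>
      simp [hx, hy, map_smul, smul_smul, inv_mul_cancel₀ hs, mul_inv_cancel₀ hs]
  · intro d
    refine ⟨s • d, ?_, ?_⟩ <;> simp [hx, hy, map_smul, smul_smul, mul_comm]

private lemma eq_of_prop (mul : A →ₗ[F] A →ₗ[F] A)
    (hrs : ∀ a : A, a ≠ 0 → Surjective fun z => mul z a)
    {x y x' y' : A} {c : F} (hx : x ≠ 0) (hx' : x' ≠ 0)
    (hy : y = c • x) (hy' : y' = c • x') :
    {w : A × A | ∃ a : A, w = (mul a x, mul a y)} =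
      {w : A × A | ∃ a : A, w = (mul a x', mul a y')} := by
  apply sets_eq
  · intro e
    obtain ⟨d, hd⟩ := hrs x' hx' (mul e x)
    have hd' : mul d x' = mul e x := hd
    exact ⟨d, hd', by simp only [hy, hy', map_smul]; rw [hd']⟩
  · intro d
    obtain ⟨e, he⟩ := hrs x hx (mul d x')
    have he' : mul e x = mul d x' := he
    exact ⟨e, he', by simp only [hy, hy', map_smul]; rw [he']⟩

private lemma eq_of_zero (mul : A →ₗ[F] A →ₗ[F] A)
    (hrs : ∀ a : A, a ≠ 0 → Surjective fun z => mul z a)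
    {x y x' y' : A} (hx : x = 0) (hx' : x' = 0) (hy : y ≠ 0) (hy' : y' ≠ 0) :
    {w : A × A | ∃ a : A, w = (mul a x, mul a y)} =
      {w : A × A | ∃ a : A, w = (mul a x', mul a y')} := by
  apply sets_eq
  · intro e
    obtain ⟨d, hd⟩ := hrs y' hy' (mul e y)
    have hd' : mul d y' = mul e y := hd
    refine ⟨d, ?_, hd'⟩
    rw [hx, hx', map_zero, map_zero]
  · intro d
    obtain ⟨e, he⟩ := hrs y hy (mul d y')
    have he' : mul e y = mul d y' := he
    refine ⟨e, ?_, he'⟩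
    rw [hx, hx', map_zero, map_zero]

private lemma indep_or (mul : A →ₗ[F] A →ₗ[F] A)
    (hli : ∀ a : A, a ≠ 0 → Injective fun z => mul a z)
    (hrs : ∀ a : A, a ≠ 0 → Surjective fun z => mul z a)
    {x y x' y' a b : A} (ha : a ≠ 0) (hb : b ≠ 0)
    (hxx : mul a x = mul b x') (hyy : mul a y = mul b y')
    (hw0 : ¬(mul a x = 0 ∧ mul a y = 0)) :
    LinearIndependent F ![x, y] ∨
      {w : A × A | ∃ a : A, w = (mul a x, mul a y)} =
        {w : A × A | ∃ a : A, w = (mul a x', mul a y')} := by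
  by_cases hind : LinearIndependent F ![x, y]
  · exact Or.inl hind
  right
  rw [LinearIndependent.pair_iff] at hind
  push_neg at hind
  obtain ⟨s, t, hst, hst0⟩ := hind
  have hmz : ∀ z : A, mul z (0 : A) = 0 := fun z => map_zero (mul z)
  by_cases ht : t = 0
  · have hs : s ≠ 0 := fun h => hst0 h ht
    have hx0 : x = 0 := by
      have h1 : s • x = 0 := by simpa [ht] using hst
      exact (smul_eq_zero.1 h1).resolve_left hs
    have hy0 : y ≠ 0 := by
      rintro rfl
      exact hw0 ⟨by rw [hx0, hmz], hmz a⟩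
    have hay : mul a y ≠ 0 := by
      intro h0
      exact hy0 (hli a ha (by simpa [hmz] using h0))
    have hx'0 : x' = 0 := by
      apply hli b hb
      show mul b x' = mul b 0
      rw [← hxx, hx0, hmz, hmz]
    have hy'0 : y' ≠ 0 := by
      rintro rfl
      exact hay (by rw [hyy, hmz])
    exact eq_of_zero mul hrs hx0 hx'0 hy0 hy'0
  · set c : F := -(t⁻¹ * s) with hc
    have hyc : y = c • x := by
      have h1 : t • y = -(s • x) := eq_neg_of_add_eq_zero_right hst
      have h2 : t⁻¹ • (t • y) = t⁻¹ • -(s • x) := congrArg _ h1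
      rw [smul_smul, inv_mul_cancel₀ ht, one_smul, smul_neg, smul_smul] at h2
      show y = (-(t⁻¹ * s)) • x
      rw [neg_smul]
      exact h2
    have hx0 : x ≠ 0 := by
      rintro rfl
      exact hw0 ⟨hmz a, by rw [hyc, smul_zero, hmz]⟩
    have hax : mul a x ≠ 0 := by
      intro h0
      exact hx0 (hli a ha (by simpa [hmz] using h0))
    have hx'0 : x' ≠ 0 := by
      rintro rfl
      exact hax (by rw [hxx, hmz])
    have hy'c : y' = c • x' := by
      apply hli b hb
      show mul b y' = mul b (c • x')
      rw [← hyy, hyc, map_smul, map_smul, hxx]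
    exact eq_of_prop mul hrs hx0 hx'0 hyc hy'c

private lemma prop_of_dep (mul : A →ₗ[F] A →ₗ[F] A)
    (hli : ∀ a : A, a ≠ 0 → Injective fun z => mul a z)
    (hrinj : ∀ a : A, a ≠ 0 → Injective fun z => mul z a)
    {x y x' y' a b : A} (hb : b ≠ 0)
    (hxx : mul a x = mul b x') (hyy : mul a y = mul b y')
    (hx0 : x ≠ 0) (hx'0 : x' ≠ 0) (hdep : ¬ LinearIndependent F ![x, x']) :
    ∃ c : F, c ≠ 0 ∧ x' = c • x ∧ y' = c • y := by
  rw [LinearIndependent.pair_iff' hx0] at hdep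
  push_neg at hdep
  obtain ⟨c, hcx⟩ := hdep
  have hc : c ≠ 0 := by
    rintro rfl
    exact hx'0 (by rw [← hcx, zero_smul])
  refine ⟨c, hc, hcx.symm, ?_⟩
  have hab : a = c • b := by
    apply hrinj x hx0
    show mul a x = mul (c • b) x
    rw [hxx, ← hcx]
    simp [map_smul]
  apply hli b hb
  show mul b y' = mul b (c • y)
  rw [← hyy, hab]
  simp [map_smul]

end Aux

/-- Proposition 6.8: if `Av ∩ Av' ≠ 0` and `Av ≠ Av'`, then the spans
`⟨x,y⟩, ⟨x',y'⟩, ⟨x,x'⟩, ⟨y,y'⟩` are all two-dimensional and `⟨x,y⟩ ≠ ⟨x',y'⟩`. -/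
theorem stmt16 {F A : Type*} [Field F] [Finite F] [AddCommGroup A] [Module F A]
    (mul : A →ₗ[F] A →ₗ[F] A)
    (hdim : Module.finrank F A = 3)
    (hl : ∀ a : A, a ≠ 0 → Function.Bijective fun z => mul a z)
    (hr : ∀ a : A, a ≠ 0 → Function.Bijective fun z => mul z a)
    (hna : ¬ ∀ a b c : A, mul (mul a b) c = mul a (mul b c))
    (x y x' y' : A)
    (hne : {w : A × A | ∃ a : A, w = (mul a x, mul a y)} ≠
        {w : A × A | ∃ a : A, w = (mul a x', mul a y')})
    (hint : ∃ w : A × A, w ≠ 0 ∧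
        w ∈ {w : A × A | ∃ a : A, w = (mul a x, mul a y)} ∧
        w ∈ {w : A × A | ∃ a : A, w = (mul a x', mul a y')}) :
    Module.finrank F (Submodule.span F {x, y}) = 2 ∧
    Module.finrank F (Submodule.span F {x', y'}) = 2 ∧
    Module.finrank F (Submodule.span F {x, x'}) = 2 ∧
    Module.finrank F (Submodule.span F {y, y'}) = 2 ∧
    Submodule.span F {x, y} ≠ Submodule.span F {x', y'} := by
  classical
  obtain ⟨w, hw0, ⟨a, hwa⟩, ⟨b, hwb⟩⟩ := hint
  subst hwa
  have hxx : mul a x = mul b x' := congrArg Prod.fst hwb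
  have hyy : mul a y = mul b y' := congrArg Prod.snd hwb
  have hmz : ∀ z : A, mul z (0 : A) = 0 := fun z => map_zero (mul z)
  have hzm : ∀ z : A, mul (0 : A) z = 0 := fun z => by
    rw [map_zero mul]; rfl
  have ha : a ≠ 0 := by
    rintro rfl
    exact hw0 (by rw [hzm, hzm]; rfl)
  have hb : b ≠ 0 := by
    rintro rfl
    exact hw0 (by rw [hwb, hzm, hzm]; rfl)
  have hli : ∀ a : A, a ≠ 0 → Function.Injective fun z => mul a z :=
    fun a ha => (hl a ha).1
  have hrs : ∀ a : A, a ≠ 0 → Function.Surjective fun z => mul z a :=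
    fun a ha => (hr a ha).2
  have hrinj : ∀ a : A, a ≠ 0 → Function.Injective fun z => mul z a :=
    fun a ha => (hr a ha).1
  have hw0' : ¬(mul a x = 0 ∧ mul a y = 0) := by
    rintro ⟨h1, h2⟩
    exact hw0 (by rw [h1, h2]; rfl)
  have hw0'' : ¬(mul b x' = 0 ∧ mul b y' = 0) := by
    rw [← hxx, ← hyy]; exact hw0'
  have hIxy : LinearIndependent F ![x, y] :=
    (indep_or mul hli hrs ha hb hxx hyy hw0').resolve_right hne
  have hIx'y' : LinearIndependent F ![x', y'] :=
    (indep_or mul hli hrs hb ha hxx.symm hyy.symm hw0'').resolve_right fun h => hne h.symm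
  have hx0 : x ≠ 0 := by simpa using hIxy.ne_zero 0
  have hy0 : y ≠ 0 := by simpa using hIxy.ne_zero 1
  have hx'0 : x' ≠ 0 := by simpa using hIx'y'.ne_zero 0
  have hy'0 : y' ≠ 0 := by simpa using hIx'y'.ne_zero 1
  have hIxx' : LinearIndependent F ![x, x'] := by
    by_contra hdep
    obtain ⟨c, hc, hcx, hcy⟩ := prop_of_dep mul hli hrinj hb hxx hyy hx0 hx'0 hdep
    exact hne (eq_of_smul mul hc hcx hcy)
  have hIyy' : LinearIndependent F ![y, y'] := by
    by_contra hdep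
    obtain ⟨c, hc, hcy, hcx⟩ := prop_of_dep mul hli hrinj hb hyy hxx hy0 hy'0 hdep
    exact hne (eq_of_smul mul hc hcx hcy)
  have hspan : Submodule.span F ({x, y} : Set A) ≠ Submodule.span F ({x', y'} : Set A) := by
    intro hsp
    have hx'mem : x' ∈ Submodule.span F ({x, y} : Set A) := by
      rw [hsp]; exact Submodule.subset_span (Set.mem_insert _ _)
    have hy'mem : y' ∈ Submodule.span F ({x, y} : Set A) := by
      rw [hsp]; exact Submodule.subset_span (Set.mem_insert_of_mem _ rfl)
    obtain ⟨α, β, hx'⟩ := Submodule.mem_span_pair.1 hx'mem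
    obtain ⟨γ, δ, hy'⟩ := Submodule.mem_span_pair.1 hy'mem
    have hbij : Function.Bijective (mul.flip x) := hr x hx0
    set e : A ≃ₗ[F] A := LinearEquiv.ofBijective (mul.flip x) hbij with he
    set Q : A →ₗ[F] A := e.symm.toLinearMap ∘ₗ mul.flip y with hQdef
    have hsymmx : ∀ v : A, e.symm (mul v x) = v := fun v => e.symm_apply_apply v
    have hQap : ∀ v : A, Q v = e.symm (mul v y) := fun v => rfl
    have heapp : ∀ v : A, e v = mul v x := fun v => rfl
    have heig : ∀ (μ : F) (v : A), Q v = μ • v → v = 0 := by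
      intro μ v h
      by_contra hv
      have h2 : mul v y = mul v (μ • x) := by
        have h3 := congrArg e h
        rw [hQap, e.apply_symm_apply, map_smul, heapp] at h3
        rw [map_smul]
        exact h3
      have h4 : y = μ • x := hli v hv h2
      rw [LinearIndependent.pair_iff' hx0] at hIxy
      exact hIxy μ h4.symm
    have rel1 : a = α • b + β • Q b := by
      have h : mul a x = α • mul b x + β • mul b y := by
        rw [hxx, ← hx', map_add, map_smul, map_smul]
      have h2 := congrArg e.symm h
      rw [map_add, map_smul, map_smul, hsymmx, hsymmx, ← hQap] at h2
      exact h2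
    have rel2 : Q a = γ • b + δ • Q b := by
      have h : mul a y = γ • mul b x + δ • mul b y := by
        rw [hyy, ← hy', map_add, map_smul, map_smul]
      have h2 := congrArg e.symm h
      rw [map_add, map_smul, map_smul, hsymmx, ← hQap, ← hQap] at h2
      exact h2
    have hcomb : β • Q (Q b) + (α - δ) • Q b + (-γ) • b = 0 := by
      have h5 := congrArg Q rel1
      rw [map_add, map_smul, map_smul, rel2] at h5
      have h6 : β • Q (Q b) = γ • b + δ • Q b - α • Q b := by
        rw [eq_sub_iff_add_eq, add_comm (β • Q (Q b))]
        exact h5.symm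
      rw [h6, sub_smul, neg_smul]
      abel
    obtain ⟨hβ0, hαδ, hγ0⟩ := key hdim Q heig hb hcomb
    have hγ : γ = 0 := by
      have := neg_eq_zero.1 hγ0
      exact this
    have hδα : δ = α := (sub_eq_zero.1 hαδ).symm
    have hα : α ≠ 0 := by
      rintro rfl
      apply hx'0
      rw [← hx', hβ0]
      simp
    apply hne
    refine eq_of_smul mul hα ?_ ?_
    · rw [← hx', hβ0, zero_smul, add_zero]
    · rw [← hy', hγ, hδα, zero_smul, zero_add]
  exact ⟨rank2' hIxy, rank2' hIx'y', rank2' hIxx', rank2' hIyy', hspan⟩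
end
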